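/- Let n ≥ 1, let A, B : Fin n → Fin n → ℝ have all entries in [0.9, 1.1], let k ∈ Fin n and 0 ≤ δ ≤ 1/10, and let G_t = (1−t)G₀ + tG₁ be the associated homotopy of (n+1)×(n+1) bimatrix games. Then every Nash equilibrium (x, y) of the game G_{3/5} satisfies 1/10 ≤ x(0) ≤ 9/10 and 1/10 ≤ y(0) ≤ 9/10. -/

import Mathlib

open Finset in
/-- Expected payoff Σ_{i,j} x(i)·M(i,j)·y(j) of the game matrix M under mixed
strategies x (row) and y (column). -/
def payoff {m : ℕ} (M : Fin m → Fin m → ℝ) (x y : Fin m → ℝ) : ℝ :=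
  ∑ i, ∑ j, x i * M i j * y j

/-- (x,y) is a Nash equilibrium of the bimatrix game with row payoff matrix R and
column payoff matrix C. -/
def NashEq {m : ℕ} (R C : Fin m → Fin m → ℝ) (x y : Fin m → ℝ) : Prop :=
  x ∈ stdSimplex ℝ (Fin m) ∧ y ∈ stdSimplex ℝ (Fin m) ∧
  (∀ x' ∈ stdSimplex ℝ (Fin m), payoff R x' y ≤ payoff R x y) ∧
  (∀ y' ∈ stdSimplex ℝ (Fin m), payoff C x y' ≤ payoff C x y)

/-- Row payoff matrix R₁ of the game G₁: R₁(0,j) = 0, R₁(i+1,0) = −1,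
R₁(i+1,j+1) = A(i,j). -/
def R1 {n : ℕ} (A : Fin n → Fin n → ℝ) (i j : Fin (n + 1)) : ℝ :=
  Fin.cases 0 (fun i' => Fin.cases (-1) (fun j' => A i' j') j) i

/-- Column payoff matrix C₁ of the game G₁: C₁(0,0) = −1, C₁(0,j+1) = 3/4 + δ if j = k
and 3/4 otherwise, C₁(i+1,0) = 3/4, C₁(i+1,j+1) = B(i,j). -/
noncomputable def C1 {n : ℕ} (B : Fin n → Fin n → ℝ) (k : Fin n) (δ : ℝ) (i j : Fin (n + 1)) : ℝ :=
  Fin.cases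
    (Fin.cases (-1) (fun j' => if j' = k then 3 / 4 + δ else 3 / 4) j)
    (fun i' => Fin.cases (3 / 4) (fun j' => B i' j') j) i

/-- Row payoff matrix R₀ of the game G₀: payoff 1 on row 0, payoff 0 elsewhere. -/
noncomputable def R0 {n : ℕ} (i _j : Fin (n + 1)) : ℝ := if i = 0 then 1 else 0

/-- Column payoff matrix C₀ of the game G₀: payoff 1 on column 0, payoff 0 elsewhere. -/
noncomputable def C0 {n : ℕ} (_i j : Fin (n + 1)) : ℝ := if j = 0 then 1 else 0

/-
At t = 3/5 the row player's safe row 0 pays 2/5 and a row i+1 pays (3/5)(A y_tail − y 0), while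
column 0 pays 17/20 − (21/20) x 0 and a column j+1 pays (3/5)(c_j x 0 + B x_tail) with
c_j ∈ [3/4, 3/4 + δ]. As the entries of A and B lie near 1, an extreme value of x 0 or y 0 makes
the opponent's strategy 0 strictly better or strictly worse than its other pure strategies, and in
an equilibrium strictly worse pure strategies get probability 0. Following best responses around
  y 0 > 9/10 ⇒ x 0 = 1 ⇒ y 0 = 0,   x 0 > 9/10 ⇒ y 0 = 0 ⇒ x 0 = 0,
  y 0 < 1/10 ⇒ x 0 = 0 ⇒ y 0 = 1,   x 0 < 1/10 ⇒ y 0 = 1 ⇒ x 0 = 1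
gives a contradiction in each case.
-/

open Finset Matrix

lemma payoff_eq_dotProduct_mulVec {m : ℕ} (M : Fin m → Fin m → ℝ) (x y : Fin m → ℝ) :
    payoff M x y = x ⬝ᵥ (M *ᵥ y) := by
  simp only [payoff, dotProduct, mulVec, mul_sum, mul_assoc]

lemma payoff_eq_vecMul_dotProduct {m : ℕ} (M : Fin m → Fin m → ℝ) (x y : Fin m → ℝ) :
    payoff M x y = (x ᵥ* M) ⬝ᵥ y := by
  rw [payoff_eq_dotProduct_mulVec]
  exact dotProduct_mulVec x M y

lemma eq_zero_of_lt_dotProduct {ι : Type*} [Fintype ι] {p f : ι → ℝ}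
    (hp : p ∈ stdSimplex ℝ ι) (hf : ∀ j, f j ≤ p ⬝ᵥ f) {i : ι} (hi : f i < p ⬝ᵥ f) :
    p i = 0 := by
  set c := p ⬝ᵥ f
  have hsum : ∑ j, p j * (c - f j) = 0 := by
    simp only [mul_sub, sum_sub_distrib, ← sum_mul, hp.2, one_mul]
    exact sub_self c
  have hterm := (sum_eq_zero_iff_of_nonneg fun j _ => mul_nonneg (hp.1 j) (sub_nonneg.2 (hf j))).1
    hsum i (mem_univ i)
  exact (mul_eq_zero.1 hterm).resolve_right (sub_ne_zero.2 hi.ne')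

section NashEquilibrium

variable {m : ℕ} {R C : Fin m → Fin m → ℝ} {x y : Fin m → ℝ}

lemma NashEq.mulVec_le_payoff (h : NashEq R C x y) (i : Fin m) :
    (R *ᵥ y) i ≤ payoff R x y := by
  simpa [payoff_eq_dotProduct_mulVec] using h.2.2.1 _ (single_mem_stdSimplex ℝ i)

lemma NashEq.vecMul_le_payoff (h : NashEq R C x y) (j : Fin m) :
    (x ᵥ* C) j ≤ payoff C x y := by
  simpa [payoff_eq_vecMul_dotProduct] using h.2.2.2 _ (single_mem_stdSimplex ℝ j)

lemma NashEq.eq_zero_of_mulVec_lt (h : NashEq R C x y) {i i₀ : Fin m}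
    (hlt : (R *ᵥ y) i < (R *ᵥ y) i₀) : x i = 0 := by
  have hle : ∀ i', (R *ᵥ y) i' ≤ x ⬝ᵥ (R *ᵥ y) := fun i' =>
    payoff_eq_dotProduct_mulVec R x y ▸ h.mulVec_le_payoff i'
  exact eq_zero_of_lt_dotProduct h.1 hle (hlt.trans_le (hle i₀))

lemma NashEq.eq_zero_of_vecMul_lt (h : NashEq R C x y) {j j₀ : Fin m}
    (hlt : (x ᵥ* C) j < (x ᵥ* C) j₀) : y j = 0 := by
  have hle : ∀ j', (x ᵥ* C) j' ≤ y ⬝ᵥ (x ᵥ* C) := fun j' => by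
    rw [dotProduct_comm, ← payoff_eq_vecMul_dotProduct]
    exact h.vecMul_le_payoff j'
  exact eq_zero_of_lt_dotProduct h.2.1 hle (hlt.trans_le (hle j₀))

end NashEquilibrium

section Simplex

variable {m : ℕ} {x : Fin (m + 1) → ℝ}

lemma sum_succ_eq_one_sub_of_mem_stdSimplex (hx : x ∈ stdSimplex ℝ (Fin (m + 1))) :
    ∑ i : Fin m, x i.succ = 1 - x 0 := by
  rw [← hx.2, Fin.sum_univ_succ, add_sub_cancel_left]

lemma apply_zero_eq_one_of_mem_stdSimplex (hx : x ∈ stdSimplex ℝ (Fin (m + 1)))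
    (h : ∀ i : Fin m, x i.succ = 0) : x 0 = 1 := by
  have := sum_succ_eq_one_sub_of_mem_stdSimplex hx
  rw [sum_eq_zero fun i _ => h i] at this
  linarith

lemma sum_mul_succ_le (hx : x ∈ stdSimplex ℝ (Fin (m + 1))) {f : Fin m → ℝ} {b : ℝ}
    (hf : ∀ i, f i ≤ b) : ∑ i, f i * x i.succ ≤ b * (1 - x 0) := by
  rw [← sum_succ_eq_one_sub_of_mem_stdSimplex hx, mul_sum]
  gcongr with i
  exacts [hx.1 _, hf i]

lemma le_sum_mul_succ (hx : x ∈ stdSimplex ℝ (Fin (m + 1))) {f : Fin m → ℝ} {a : ℝ}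
    (hf : ∀ i, a ≤ f i) : a * (1 - x 0) ≤ ∑ i, f i * x i.succ := by
  rw [← sum_succ_eq_one_sub_of_mem_stdSimplex hx, mul_sum]
  gcongr with i
  exacts [hx.1 _, hf i]

end Simplex

section MidGame

variable {n : ℕ}

/-- `Rmid A` and `Cmid B k δ` are the payoff matrices of `G_{3/5} = (2/5) G₀ + (3/5) G₁`. -/
noncomputable def Rmid (A : Fin n → Fin n → ℝ) (i j : Fin (n + 1)) : ℝ :=
  (1 - 3 / 5 : ℝ) * R0 i j + (3 / 5 : ℝ) * R1 A i j

noncomputable def Cmid (B : Fin n → Fin n → ℝ) (k : Fin n) (δ : ℝ) (i j : Fin (n + 1)) : ℝ :=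
  (1 - 3 / 5 : ℝ) * C0 i j + (3 / 5 : ℝ) * C1 B k δ i j

variable {A B : Fin n → Fin n → ℝ} {k : Fin n} {δ : ℝ} {x y : Fin (n + 1) → ℝ}

lemma Rmid_mulVec_zero (hy : ∑ j, y j = 1) : (Rmid A *ᵥ y) 0 = 2 / 5 := by
  simp only [mulVec, dotProduct, Rmid, R0, R1, Fin.cases_zero, if_pos]
  rw [← mul_sum, hy]
  norm_num

lemma Rmid_mulVec_succ (i : Fin n) :
    (Rmid A *ᵥ y) i.succ = 3 / 5 * (∑ j, A i j * y j.succ - y 0) := by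
  simp only [mulVec, dotProduct, Rmid, R0, Fin.succ_ne_zero, ↓reduceIte, mul_zero, R1,
    Fin.cases_succ, zero_add, Fin.sum_univ_succ, Fin.cases_zero, mul_neg, mul_one, neg_mul]
  simp only [mul_assoc, ← mul_sum]
  ring

lemma Cmid_vecMul_zero (hx : x ∈ stdSimplex ℝ (Fin (n + 1))) :
    (x ᵥ* Cmid B k δ) 0 = 17 / 20 - 21 / 20 * x 0 := by
  simp only [vecMul, dotProduct, Cmid, C0, ↓reduceIte, mul_one, C1, Fin.cases_zero,
    Fin.sum_univ_succ, mul_neg, Fin.cases_succ, ← sum_mul, sum_succ_eq_one_sub_of_mem_stdSimplex hx]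
  ring

lemma Cmid_vecMul_succ (j : Fin n) :
    (x ᵥ* Cmid B k δ) j.succ =
      3 / 5 * ((if j = k then 3 / 4 + δ else 3 / 4) * x 0 + ∑ i, B i j * x i.succ) := by
  simp only [vecMul, dotProduct, Cmid, C0, Fin.succ_ne_zero, ↓reduceIte, mul_zero, C1,
    Fin.cases_succ, zero_add, mul_comm (x _), Fin.sum_univ_succ, Fin.cases_zero, mul_ite, ite_mul]
  simp only [mul_assoc, ← mul_sum]
  split_ifs <;> ring


lemma x_zero_eq_one_of_nine_tenths_lt_y_zero (hA : ∀ i j, A i j ≤ 1.1)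
    (hNE : NashEq (Rmid A) (Cmid B k δ) x y) (hy : 9 / 10 < y 0) : x 0 = 1 := by
  refine apply_zero_eq_one_of_mem_stdSimplex hNE.1 fun i => hNE.eq_zero_of_mulVec_lt (i₀ := 0) ?_
  rw [Rmid_mulVec_succ, Rmid_mulVec_zero hNE.2.1.2]
  have := sum_mul_succ_le hNE.2.1 (hA i)
  linarith

lemma x_zero_eq_zero_of_y_zero_lt_one_tenth (hA : ∀ i j, 0.9 ≤ A i j) (i : Fin n)
    (hNE : NashEq (Rmid A) (Cmid B k δ) x y) (hy : y 0 < 1 / 10) : x 0 = 0 := by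
  refine hNE.eq_zero_of_mulVec_lt (i₀ := i.succ) ?_
  rw [Rmid_mulVec_succ, Rmid_mulVec_zero hNE.2.1.2]
  have := le_sum_mul_succ hNE.2.1 (hA i)
  linarith

lemma y_zero_eq_zero_of_nine_tenths_lt_x_zero (hB : ∀ i j, 0.9 ≤ B i j) (hδ : 0 ≤ δ) (j : Fin n)
    (hNE : NashEq (Rmid A) (Cmid B k δ) x y) (hx : 9 / 10 < x 0) : y 0 = 0 := by
  refine hNE.eq_zero_of_vecMul_lt (j₀ := j.succ) ?_
  rw [Cmid_vecMul_zero hNE.1, Cmid_vecMul_succ]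
  have := le_sum_mul_succ hNE.1 (fun i => hB i j)
  split_ifs <;> nlinarith

lemma y_zero_eq_one_of_x_zero_lt_one_tenth (hB : ∀ i j, B i j ≤ 1.1) (hδ : δ ≤ 1 / 10)
    (hNE : NashEq (Rmid A) (Cmid B k δ) x y) (hx : x 0 < 1 / 10) : y 0 = 1 := by
  refine apply_zero_eq_one_of_mem_stdSimplex hNE.2.1 fun j =>
    hNE.eq_zero_of_vecMul_lt (j₀ := 0) ?_
  rw [Cmid_vecMul_zero hNE.1, Cmid_vecMul_succ]
  have := sum_mul_succ_le hNE.1 (fun i => hB i j)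
  have := hNE.1.1 0
  split_ifs <;> nlinarith

end MidGame

/-- in every Nash equilibrium of G_{3/5}, both players put probability
between 1/10 and 9/10 on their 0-th strategy. -/
theorem nashEq_Gmid_mixed (n : ℕ) (hn : 1 ≤ n) (A B : Fin n → Fin n → ℝ)
    (hA : ∀ i j, A i j ∈ Set.Icc (0.9 : ℝ) 1.1)
    (hB : ∀ i j, B i j ∈ Set.Icc (0.9 : ℝ) 1.1)
    (k : Fin n) (δ : ℝ) (hδ0 : 0 ≤ δ) (hδ1 : δ ≤ 1 / 10)
    (x y : Fin (n + 1) → ℝ)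
    (hNE : NashEq (fun i j => (1 - 3 / 5 : ℝ) * R0 i j + (3 / 5 : ℝ) * R1 A i j)
                  (fun i j => (1 - 3 / 5 : ℝ) * C0 i j + (3 / 5 : ℝ) * C1 B k δ i j) x y) :
    (1 / 10 ≤ x 0 ∧ x 0 ≤ 9 / 10) ∧ (1 / 10 ≤ y 0 ∧ y 0 ≤ 9 / 10) := by
  replace hNE : NashEq (Rmid A) (Cmid B k δ) x y := hNE
  have hA₁ := fun i j => (hA i j).1
  have hA₂ := fun i j => (hA i j).2
  have hB₁ := fun i j => (hB i j).1
  have hB₂ := fun i j => (hB i j).2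
  let i₀ : Fin n := ⟨0, hn⟩
  refine ⟨⟨?_, ?_⟩, ?_, ?_⟩ <;> by_contra! h
  · have hy := y_zero_eq_one_of_x_zero_lt_one_tenth hB₂ hδ1 hNE h
    have := x_zero_eq_one_of_nine_tenths_lt_y_zero hA₂ hNE (by linarith)
    linarith
  · have hy := y_zero_eq_zero_of_nine_tenths_lt_x_zero hB₁ hδ0 i₀ hNE h
    have := x_zero_eq_zero_of_y_zero_lt_one_tenth hA₁ i₀ hNE (by linarith)
    linarith
  · have hx := x_zero_eq_zero_of_y_zero_lt_one_tenth hA₁ i₀ hNE h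
    have := y_zero_eq_one_of_x_zero_lt_one_tenth hB₂ hδ1 hNE (by linarith)
    linarith
  · have hx := x_zero_eq_one_of_nine_tenths_lt_y_zero hA₂ hNE h
    have := y_zero_eq_zero_of_nine_tenths_lt_x_zero hB₁ hδ0 i₀ hNE (by linarith)
    linarith
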